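/- With A analytic represented by a tree T and the rank δ defined as the least α with A_x = (A_α)_x: the set Δ = {(x,f) : f ∈ WO and δ(x) ≤ ot(f)} is Π¹₂, and the set {x : A_x is Borel} is Σ¹₃. -/

import Mathlib

/-!
For a code `f` of a well-order, `rank T_{xy} ≤ ot(f)` holds iff the proper nodes of `T_{xy}`
admit a strictly order-preserving map into the order coded by `f`. This is a Σ¹₁ condition on
`(x, f, y)`, so the complement of `Δ` (pairs with `f ∉ WO`, or with some `y` for which `T_{xy}` is
well-founded of rank above `ot(f)`) is Σ¹₂.

If `A_x` is Borel, then `{y : T_{xy} ∈ WF}` is analytic, the range of some continuous `g`. The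
ranks of the trees `T_{x,g(u)}` are dominated (Kunen–Martin) by the ranks of one well-founded
relation on the countable set of pairs `(σ, s)` of finite sequences such that `s` is a node of
`T_{x,g(u)}` for every `u` extending `σ`; so they are bounded by a countable ordinal, hence by
`ot(f)` for some `f ∈ WO`. Conversely, for countable `α` the sections of `A_α` are Borel by
induction on `α`. Hence `{x : A_x Borel}` is the projection of `Δ`.
-/

open MeasureTheory

/-- The "extension" relation of a tree `T ⊆ ω^{<ω}`: `s` is a proper extension
of `t` and `s ∈ T`.  `T` is well-founded (has no infinite branch) iff this
relation is well-founded. -/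
def branchRel (T : Set (List ℕ)) : List ℕ → List ℕ → Prop :=
  fun s t => t <+: s ∧ s ≠ t ∧ s ∈ T

/-- `T` is a well-founded tree (`T ∈ WF`). -/
def TreeWF (T : Set (List ℕ)) : Prop := WellFounded (branchRel T)

/-- The ordinal rank of a well-founded tree, computed at the empty sequence. -/
noncomputable def treeRank (T : Set (List ℕ)) (h : TreeWF T) : Ordinal :=
  (h.apply []).rank

/-- `T ∈ WF_α`: `T` is well-founded of rank at most `α`. -/
def TreeRankLE (T : Set (List ℕ)) (α : Ordinal) : Prop :=
  ∃ h : TreeWF T, treeRank T h ≤ α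

/-- The section tree `T_{xy} = {s : (x↾|s|, y↾|s|, s) ∈ T}` of a tree `T` on
`ω × ω × ω`. -/
def secTree (T : Set (List (ℕ × ℕ × ℕ))) (x y : ℕ → ℕ) : Set (List ℕ) :=
  {s | (List.ofFn fun i : Fin s.length => (x i.1, y i.1, s.get i)) ∈ T}

/-- The `α`-th approximation `A_α = {(x,y) : T_{xy} ∉ WF_α}` to the analytic set
represented by `T`. -/
def Aapprox (T : Set (List (ℕ × ℕ × ℕ))) (α : Ordinal) : Set ((ℕ → ℕ) × (ℕ → ℕ)) :=
  {p | ¬ TreeRankLE (secTree T p.1 p.2) α}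


/-- Boldface Π¹₁: complements of analytic sets. -/
def IsPi11 {X : Type*} [TopologicalSpace X] (A : Set X) : Prop :=
  AnalyticSet Aᶜ

/-- Boldface Σ¹₂: projections of Π¹₁ subsets of `X × ω^ω`. -/
def IsSigma12 {X : Type*} [TopologicalSpace X] (A : Set X) : Prop :=
  ∃ C : Set (X × (ℕ → ℕ)), IsPi11 C ∧ A = Prod.fst '' C

/-- Boldface Π¹₂: complements of Σ¹₂ sets. -/
def IsPi12 {X : Type*} [TopologicalSpace X] (A : Set X) : Prop :=
  IsSigma12 Aᶜ

/-- Boldface Σ¹₃: projections of Π¹₂ subsets of `X × ω^ω`. -/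
def IsSigma13 {X : Type*} [TopologicalSpace X] (A : Set X) : Prop :=
  ∃ C : Set (X × (ℕ → ℕ)), IsPi12 C ∧ A = Prod.fst '' C

/-- The binary relation on `ω` coded by `f : ω → ω`. -/
def relOf (f : ℕ → ℕ) : ℕ → ℕ → Prop := fun m n => f (Nat.pair m n) = 1

/-- `f ∈ WO`: `f` codes a well-order of `ω`. -/
def WOcode (f : ℕ → ℕ) : Prop := IsWellOrder ℕ (relOf f)

open Classical in
/-- The order type `ot(f)` of the well-order coded by `f` (junk value `0` if `f`
is not a code of a well-order). -/
noncomputable def otf (f : ℕ → ℕ) : Ordinal :=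
  if h : IsWellOrder ℕ (relOf f) then @Ordinal.type ℕ (relOf f) h else 0

/-- The set `Δ = {(x,f) : f ∈ WO ∧ δ(x) ≤ ot(f)}`; since the approximations
`A_α` are decreasing in `α`, `δ(x) ≤ ot(f)` iff `A_x = (A_{ot(f)})_x`. -/
def DeltaSet (A : Set ((ℕ → ℕ) × (ℕ → ℕ))) (T : Set (List (ℕ × ℕ × ℕ))) :
    Set ((ℕ → ℕ) × (ℕ → ℕ)) :=
  {p | WOcode p.2 ∧ {y | (p.1, y) ∈ A} = {y | (p.1, y) ∈ Aapprox T (otf p.2)}}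

open Set Ordinal

section Pointclasses

variable {X : Type*} [TopologicalSpace X]

theorem MeasureTheory.AnalyticSet.union {s t : Set X} (hs : AnalyticSet s) (ht : AnalyticSet t) :
    AnalyticSet (s ∪ t) := by
  rw [union_eq_iUnion]
  exact AnalyticSet.iUnion fun b => by cases b <;> assumption

theorem MeasureTheory.AnalyticSet.inter [T2Space X] {s t : Set X} (hs : AnalyticSet s)
    (ht : AnalyticSet t) : AnalyticSet (s ∩ t) := by
  rw [inter_eq_iInter]
  exact AnalyticSet.iInter fun b => by cases b <;> assumption

theorem IsPi11.union [T2Space X] {s t : Set X} (hs : IsPi11 s) (ht : IsPi11 t) :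
    IsPi11 (s ∪ t) := by
  rw [IsPi11, compl_union]
  exact hs.inter ht

theorem IsClosed.isPi11 [PolishSpace X] {s : Set X} (hs : IsClosed s) : IsPi11 s := by
  simpa [IsPi11] using hs.isOpen_compl.analyticSet_image continuous_id

theorem IsSigma12.union [T2Space X] {s t : Set X} (hs : IsSigma12 s) (ht : IsSigma12 t) :
    IsSigma12 (s ∪ t) := by
  obtain ⟨C, hC, rfl⟩ := hs
  obtain ⟨D, hD, rfl⟩ := ht
  exact ⟨C ∪ D, hC.union hD, (image_union _ _ _).symm⟩

theorem MeasureTheory.AnalyticSet.isSigma12 [PolishSpace X] {s : Set X} (hs : AnalyticSet s) :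
    IsSigma12 s := by
  rw [AnalyticSet] at hs
  rcases hs with rfl | ⟨g, hg, rfl⟩
  · exact ⟨∅, isClosed_empty.isPi11, (image_empty _).symm⟩
  · refine ⟨{p | p.1 = g p.2}, (isClosed_eq continuous_fst (hg.comp continuous_snd)).isPi11, ?_⟩
    ext x
    simp [eq_comm]

theorem analyticSet_setOf_exists {Y : Type*} [TopologicalSpace Y] [PolishSpace X] [PolishSpace Y]
    [MeasurableSpace X] [BorelSpace X] [MeasurableSpace Y] [BorelSpace Y] {P : X → Y → Prop}
    (hP : Measurable fun z : X × Y => P z.1 z.2) : AnalyticSet {x | ∃ y, P x y} := by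
  have : {x | ∃ y, P x y} = Prod.fst '' {z : X × Y | P z.1 z.2} := by ext; simp
  rw [this]
  exact (measurableSet_setOfPred.2 hP).analyticSet.image_of_continuous continuous_fst

end Pointclasses

section Measurability

variable {W : Type*} [MeasurableSpace W]

theorem Measurable.apply_nat {β : Type*} [MeasurableSpace β] {F : W → ℕ → β} {i : W → ℕ}
    (hF : Measurable F) (hi : Measurable i) : Measurable fun w => F w (i w) :=
  (measurable_from_prod_countable_left (f := fun p : (ℕ → β) × ℕ => p.1 p.2)
    fun n => measurable_pi_apply n).comp (hF.prodMk hi)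

@[fun_prop]
theorem Measurable.relOf {F : W → ℕ → ℕ} {a b : W → ℕ} (hF : Measurable F) (ha : Measurable a)
    (hb : Measurable b) : Measurable fun w => relOf (F w) (a w) (b w) :=
  (hF.apply_nat ((measurable_of_countable (Function.uncurry Nat.pair)).comp
    (ha.prodMk hb))).eq_const 1

@[fun_prop]
theorem Measurable.mem_secTree (T : Set (List (ℕ × ℕ × ℕ))) (s : List ℕ) {X Y : W → ℕ → ℕ}
    (hX : Measurable X) (hY : Measurable Y) : Measurable fun w => s ∈ secTree T (X w) (Y w) :=
  (Measurable.of_discrete (f := fun v : Fin s.length → ℕ × ℕ =>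
    List.ofFn (fun i => ((v i).1, (v i).2, s.get i)) ∈ T)).comp
    (by fun_prop : Measurable fun w (i : Fin s.length) => (X w i, Y w i))

end Measurability

section Rank

universe u

variable {α : Type u} {r : α → α → Prop}

def AccRankLE (r : α → α → Prop) (a : α) (o : Ordinal.{u}) : Prop :=
  ∃ h : Acc r a, h.rank ≤ o

theorem AccRankLE.mono {a : α} {o o' : Ordinal.{u}} (h : AccRankLE r a o) (ho : o ≤ o') :
    AccRankLE r a o' :=
  ⟨h.1, h.2.trans ho⟩

theorem accRankLE_iff {a : α} {o : Ordinal.{u}} :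
    AccRankLE r a o ↔ ∀ b, r b a → ∃ o' < o, AccRankLE r b o' := by
  constructor
  · rintro ⟨h, hle⟩ b hb
    exact ⟨_, (h.rank_lt_of_rel hb).trans_le hle, h.inv hb, le_rfl⟩
  · intro H
    have ha : Acc r a := ⟨a, fun b hb => (H b hb).choose_spec.2.1⟩
    refine ⟨ha, ?_⟩
    rw [ha.rank_eq]
    refine Ordinal.iSup_le fun ⟨b, hb⟩ => Order.succ_le_of_lt ?_
    obtain ⟨o', ho', h', hle⟩ := H b hb
    exact hle.trans_lt ho'

theorem accRankLE_of_forall_rel_lt {S : Set α} (ρ : α → Ordinal.{u})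
    (hρ : ∀ a ∈ S, ∀ b, r b a → b ∈ S ∧ ρ b < ρ a) {a : α} (ha : a ∈ S) :
    AccRankLE r a (ρ a) := by
  induction a using (InvImage.wf ρ Ordinal.lt_wf).induction with
  | _ a IH =>
    rw [accRankLE_iff]
    intro b hb
    obtain ⟨hbS, hlt⟩ := hρ a ha b hb
    exact ⟨ρ b, hlt, IH b hlt hbS⟩

theorem rank_lt_omega_one [Countable α] (hr : WellFounded r) (a : α) :
    (hr.apply a).rank < ω₁ := by
  induction a using hr.induction with
  | _ a IH =>
    rw [Acc.rank_eq]
    exact iSup_lt_omega_one fun b => (Cardinal.isSuccLimit_omega 1).succ_lt (IH b b.2)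

end Rank

theorem card_le_aleph0_of_lt_omega_one {o : Ordinal} (ho : o < ω₁) : o.card ≤ Cardinal.aleph0 := by
  rw [Cardinal.lt_omega_iff_card_lt, ← Cardinal.succ_aleph0] at ho
  exact Order.lt_succ_iff.1 ho

theorem countable_Iio_of_lt_omega_one {o : Ordinal} (ho : o < ω₁) : (Iio o).Countable := by
  rw [← Cardinal.le_aleph0_iff_set_countable, Cardinal.mk_Iio_ordinal, Cardinal.lift_le_aleph0]
  exact card_le_aleph0_of_lt_omega_one ho

section InitSeg

def initSeg (b : ℕ → ℕ) (n : ℕ) : List ℕ := List.ofFn fun i : Fin n => b i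

@[simp]
theorem length_initSeg (b : ℕ → ℕ) (n : ℕ) : (initSeg b n).length = n :=
  List.length_ofFn

theorem initSeg_prefix_initSeg (b : ℕ → ℕ) {m n : ℕ} (h : m ≤ n) : initSeg b m <+: initSeg b n := by
  rw [List.prefix_iff_eq_take]
  apply List.ext_getElem
  · simp [h]
  · intro i _ _
    simp [initSeg]

theorem initSeg_eq_initSeg_iff {u v : ℕ → ℕ} {n : ℕ} :
    initSeg v n = initSeg u n ↔ v ∈ PiNat.cylinder u n := by
  simp [initSeg, List.ofFn_inj, funext_iff, PiNat.mem_cylinder_iff, Fin.forall_iff]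

theorem PiNat.exists_cylinder_subset {O : Set (ℕ → ℕ)} (hO : IsOpen O) {u : ℕ → ℕ} (hu : u ∈ O) :
    ∃ k, PiNat.cylinder u k ⊆ O := by
  obtain ⟨_, ⟨v, k, rfl⟩, huv, hsub⟩ :=
    (PiNat.isTopologicalBasis_cylinders _).exists_subset_of_mem_open hu hO
  exact ⟨k, (PiNat.mem_cylinder_iff_eq.1 huv).trans_subset hsub⟩

theorem List.IsPrefix.length_lt_of_ne {γ : Type*} {l₁ l₂ : List γ} (h : l₁ <+: l₂) (hne : l₁ ≠ l₂) :
    l₁.length < l₂.length :=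
  h.length_le.lt_of_ne fun e => hne (h.eq_of_length e)

theorem exists_initSeg_eq_of_prefix_chain (c : ℕ → List ℕ)
    (hc : ∀ n, c n <+: c (n + 1) ∧ c n ≠ c (n + 1)) : ∃ u, ∀ n, initSeg u (c n).length = c n := by
  have hmono : ∀ m n, m ≤ n → c m <+: c n := fun m n hmn => by
    induction n, hmn using Nat.le_induction with
    | base => exact List.prefix_rfl
    | succ n _ ih => exact ih.trans (hc n).1
  have hlen : ∀ n, n < (c (n + 1)).length := fun n => by
    induction n with
    | zero => exact (Nat.zero_le _).trans_lt ((hc 0).1.length_lt_of_ne (hc 0).2)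
    | succ n ih => exact Nat.lt_of_le_of_lt ih ((hc (n + 1)).1.length_lt_of_ne (hc (n + 1)).2)
  refine ⟨fun i => (c (i + 1)).getD i 0, fun n => List.ext_getElem (by simp) fun i _ hi => ?_⟩
  simp only [initSeg, List.getElem_ofFn, List.getD_eq_getElem _ _ (hlen i)]
  rcases le_total n (i + 1) with h | h
  · exact ((hmono _ _ h).getElem hi).symm
  · exact (hmono _ _ h).getElem (hlen i)

end InitSeg

section Trees

variable {U : Set (List ℕ)}

theorem branchRel_nil_of_branchRel {s t : List ℕ} (h : branchRel U s t) : branchRel U s [] :=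
  ⟨List.nil_prefix, fun hs => h.2.1 (hs ▸ List.prefix_nil.1 (hs ▸ h.1)).symm, h.2.2⟩

theorem treeWF_of_acc_nil (h : Acc (branchRel U) []) : TreeWF U :=
  ⟨fun t => ⟨t, fun _ hs => h.inv (branchRel_nil_of_branchRel hs)⟩⟩

theorem TreeRankLE.treeWF {o : Ordinal} (h : TreeRankLE U o) : TreeWF U :=
  h.1

theorem TreeRankLE.mono {o o' : Ordinal} (h : TreeRankLE U o) (ho : o ≤ o') : TreeRankLE U o' :=
  ⟨h.1, h.2.trans ho⟩

theorem treeRankLE_iff_accRankLE {o : Ordinal} :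
    TreeRankLE U o ↔ AccRankLE (branchRel U) [] o :=
  ⟨fun ⟨h, hle⟩ => ⟨h.apply [], hle⟩, fun ⟨h, hle⟩ => ⟨treeWF_of_acc_nil h, hle⟩⟩

theorem not_treeWF_iff :
    ¬ TreeWF U ↔ ∃ b ℓ : ℕ → ℕ, (∀ n, ℓ n < ℓ (n + 1)) ∧ ∀ n, initSeg b (ℓ n) ∈ U := by
  rw [TreeWF, wellFounded_iff_isEmpty_descending_chain, not_isEmpty_iff]
  constructor
  · rintro ⟨g, hg⟩
    obtain ⟨b, hb⟩ := exists_initSeg_eq_of_prefix_chain (fun n => g (n + 1))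
      fun n => ⟨(hg (n + 1)).1, (hg (n + 1)).2.1.symm⟩
    refine ⟨b, fun n => (g (n + 1)).length,
      fun n => (hg (n + 1)).1.length_lt_of_ne (hg (n + 1)).2.1.symm,
      fun n => ?_⟩
    rw [hb n]
    exact (hg n).2.2
  · rintro ⟨b, ℓ, hℓ, hb⟩
    refine ⟨⟨fun n => initSeg b (ℓ n), fun n => ⟨initSeg_prefix_initSeg b (hℓ n).le,
      fun h => ?_, hb (n + 1)⟩⟩⟩
    exact (hℓ n).ne' (by simpa using congrArg List.length h)

def HasRankFunctionInto {β : Type*} (U : Set (List ℕ)) (R : β → β → Prop) : Prop :=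
  ∃ ρ : List ℕ → β, ∀ s t, branchRel U s t → branchRel U t [] → R (ρ s) (ρ t)

theorem treeRankLE_type_iff {β : Type} [Nonempty β] (R : β → β → Prop) [IsWellOrder β R] :
    TreeRankLE U (type R) ↔ HasRankFunctionInto U R := by
  classical
  constructor
  · rintro ⟨hU, hle⟩
    have hlt : ∀ s, branchRel U s [] → (hU.apply s).rank < type R := fun s hs =>
      ((hU.apply []).rank_lt_of_rel hs).trans_le hle
    refine ⟨fun s => if hs : branchRel U s [] then enum R ⟨_, hlt s hs⟩ else Classical.arbitrary β,
      fun s t hst ht => ?_⟩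
    simp only [dif_pos (branchRel_nil_of_branchRel hst), dif_pos ht, enum_lt_enum]
    exact (hU.apply t).rank_lt_of_rel hst
  · rintro ⟨ρ, hρ⟩
    have hS : ∀ s, branchRel U s [] → AccRankLE (branchRel U) s (typein R (ρ s)) :=
      fun s hs => accRankLE_of_forall_rel_lt (S := {s | branchRel U s []}) _
        (fun a ha b hb => ⟨branchRel_nil_of_branchRel hb, (typein_lt_typein R).2 (hρ b a hb ha)⟩) hs
    rw [treeRankLE_iff_accRankLE, accRankLE_iff]
    exact fun s hs => ⟨_, typein_lt_type R (ρ s), hS s hs⟩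

end Trees

section SectionTrees

variable (T : Set (List (ℕ × ℕ × ℕ)))

theorem mem_secTree_congr {x y y' : ℕ → ℕ} {s : List ℕ} (h : ∀ i < s.length, y i = y' i) :
    s ∈ secTree T x y ↔ s ∈ secTree T x y' := by
  simp only [secTree, mem_ofPred_eq]
  rw [List.ofFn_inj.2 (funext fun i => by rw [h i i.2])]

theorem initSeg_mem_secTree_iff (x y b : ℕ → ℕ) (n : ℕ) :
    initSeg b n ∈ secTree T x y ↔ List.ofFn (fun i : Fin n => (x i, y i, b i)) ∈ T := by
  simp only [secTree, mem_ofPred_eq]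
  congr! 1
  apply List.ext_getElem <;> simp [initSeg]

variable {W : Type*} [MeasurableSpace W]

@[fun_prop]
theorem Measurable.initSeg_mem_secTree {X Y B : W → ℕ → ℕ} {L : W → ℕ} (hX : Measurable X)
    (hY : Measurable Y) (hB : Measurable B) (hL : Measurable L) :
    Measurable fun w => initSeg (B w) (L w) ∈ secTree T (X w) (Y w) := by
  have h : ∀ n, Measurable fun w => initSeg (B w) n ∈ secTree T (X w) (Y w) := fun n => by
    simp_rw [initSeg_mem_secTree_iff]
    exact (Measurable.of_discrete (f := fun v : Fin n → ℕ × ℕ × ℕ => List.ofFn v ∈ T)).comp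
      (by fun_prop)
  simpa using Measurable.exists fun n => (hL.eq_const n).and (h n)

end SectionTrees

section WellOrderCodes

theorem woCode_iff {f : ℕ → ℕ} :
    WOcode f ↔ (∀ a b, ¬ relOf f a b → ¬ relOf f b a → a = b) ∧ WellFounded (relOf f) :=
  ⟨fun h => ⟨h.trichotomous, h.wf⟩, fun ⟨htri, hwf⟩ => @IsWellOrder.mk _ _ ⟨hwf⟩ ⟨htri⟩⟩

theorem not_woCode_iff {f : ℕ → ℕ} :
    ¬ WOcode f ↔ ∃ g : ℕ → ℕ, (¬ ∀ a b, ¬ relOf f a b → ¬ relOf f b a → a = b) ∨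
      ∀ n, relOf f (g (n + 1)) (g n) := by
  rw [woCode_iff, wellFounded_iff_isEmpty_descending_chain, not_and_or, not_isEmpty_iff,
    nonempty_subtype]
  constructor
  · rintro (h | ⟨g, hg⟩)
    exacts [⟨id, Or.inl h⟩, ⟨g, Or.inr hg⟩]
  · rintro ⟨g, h | hg⟩
    exacts [Or.inl h, Or.inr ⟨g, hg⟩]

theorem otf_eq_type {f : ℕ → ℕ} (hf : WOcode f) : otf f = @type ℕ (relOf f) hf :=
  dif_pos hf

theorem otf_lt_omega_one {f : ℕ → ℕ} (hf : WOcode f) : otf f < ω₁ := by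
  rw [otf_eq_type hf, Cardinal.lt_omega_iff_card_lt, @card_type ℕ _ hf, Cardinal.mk_nat]
  exact Cardinal.aleph0_lt_aleph_one

theorem exists_woCode_otf_eq_type (R : ℕ → ℕ → Prop) [IsWellOrder ℕ R] :
    ∃ f, WOcode f ∧ otf f = type R := by
  classical
  obtain ⟨f, rfl⟩ : ∃ f, relOf f = R :=
    ⟨fun m => if R m.unpair.1 m.unpair.2 then 1 else 0, by ext a b; simp [relOf]⟩
  exact ⟨f, (inferInstance : IsWellOrder ℕ (relOf f)), otf_eq_type _⟩

theorem exists_woCode_le_otf {α : Ordinal.{0}} (hα : α < ω₁) : ∃ f, WOcode f ∧ α ≤ otf f := by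
  have hcard : (α + ω).card = Cardinal.aleph0 := by
    rw [card_add, card_omega0]
    exact Cardinal.add_eq_right le_rfl (card_le_aleph0_of_lt_omega_one hα)
  obtain ⟨e⟩ : Nonempty (ℕ ≃ (α + ω).ToType) := by
    rw [← Cardinal.eq, Cardinal.mk_toType, hcard, Cardinal.mk_nat]
  obtain ⟨f, hf, hot⟩ := exists_woCode_otf_eq_type (e ⁻¹'o (· < ·))
  refine ⟨f, hf, ?_⟩
  rw [hot, type_preimage, type_toType]
  exact le_self_add

end WellOrderCodes

section AnalyticSets

variable {W : Type*} [TopologicalSpace W] [PolishSpace W] [MeasurableSpace W] [BorelSpace W]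

theorem analyticSet_not_woCode {F : W → ℕ → ℕ} (hF : Measurable F) :
    AnalyticSet {w | ¬ WOcode (F w)} := by
  simp_rw [not_woCode_iff]
  exact analyticSet_setOf_exists (by fun_prop)

variable (T : Set (List (ℕ × ℕ × ℕ))) {X Y : W → ℕ → ℕ}

theorem analyticSet_not_treeWF_secTree (hX : Measurable X) (hY : Measurable Y) :
    AnalyticSet {w | ¬ TreeWF (secTree T (X w) (Y w))} := by
  simp_rw [not_treeWF_iff, ← Prod.exists']
  exact analyticSet_setOf_exists (by fun_prop)

theorem analyticSet_hasRankFunctionInto_secTree (hX : Measurable X) (hY : Measurable Y)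
    {F : W → ℕ → ℕ} (hF : Measurable F) :
    AnalyticSet {w | HasRankFunctionInto (secTree T (X w) (Y w)) (relOf (F w))} := by
  unfold HasRankFunctionInto branchRel
  simp_rw [((Denumerable.eqv (List ℕ)).arrowCongr (Equiv.refl ℕ)).exists_congr_left]
  refine analyticSet_setOf_exists ?_
  simp only [Equiv.arrowCongr_symm, Equiv.arrowCongr_apply, Equiv.refl_symm, Equiv.coe_refl,
    Function.comp_apply, id_eq]
  fun_prop

end AnalyticSets

section Approximations

theorem measurableSet_setOf_accRankLE {W : Type*} [MeasurableSpace W] {U : W → Set (List ℕ)}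
    (hU : ∀ s, MeasurableSet {w | s ∈ U w}) {β : Ordinal.{0}} (hβ : β < ω₁) (s : List ℕ) :
    MeasurableSet {w | AccRankLE (branchRel (U w)) s β} := by
  induction β using WellFoundedLT.induction generalizing s with
  | _ β IH =>
    have : Countable (Iio β) := (countable_Iio_of_lt_omega_one hβ).to_subtype
    have hset : {w | AccRankLE (branchRel (U w)) s β} =
        {w | ∀ t, branchRel (U w) t s → ∃ γ : Iio β, AccRankLE (branchRel (U w)) t γ} := by
      ext w
      simp only [mem_ofPred_eq, Subtype.exists, mem_Iio, exists_prop]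
      exact accRankLE_iff
    rw [hset]
    refine measurableSet_setOfPred.2 (Measurable.forall fun t => Measurable.imp ?_
      (Measurable.exists fun γ => measurableSet_setOfPred.1 (IH γ γ.2 (γ.2.trans hβ) t)))
    unfold branchRel
    exact measurable_const.and (measurable_const.and (measurableSet_setOfPred.1 (hU t)))

theorem measurableSet_section_Aapprox (T : Set (List (ℕ × ℕ × ℕ))) (x : ℕ → ℕ)
    {α : Ordinal.{0}} (hα : α < ω₁) : MeasurableSet {y | (x, y) ∈ Aapprox T α} := by
  have : {y | (x, y) ∈ Aapprox T α} = {y | AccRankLE (branchRel (secTree T x y)) [] α}ᶜ := by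
    ext y
    simp [Aapprox, treeRankLE_iff_accRankLE]
  rw [this]
  exact (measurableSet_setOf_accRankLE (fun s => measurableSet_setOfPred.2 (by fun_prop)) hα
    []).compl

end Approximations

section Boundedness

variable (V : (ℕ → ℕ) → Set (List ℕ))

def BoundingRel (p' p : List ℕ × List ℕ) : Prop :=
  p.1 <+: p'.1 ∧ p.1 ≠ p'.1 ∧ p.2 <+: p'.2 ∧ p.2 ≠ p'.2 ∧
    ∀ u, initSeg u p'.1.length = p'.1 → p'.2 ∈ V u

variable {V}

theorem wellFounded_boundingRel (hV : ∀ u, TreeWF (V u)) : WellFounded (BoundingRel V) := by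
  rw [wellFounded_iff_isEmpty_descending_chain]
  refine ⟨fun ⟨p, hp⟩ => ?_⟩
  obtain ⟨u, hu⟩ := exists_initSeg_eq_of_prefix_chain (fun n => (p n).1)
    fun n => ⟨(hp n).1, (hp n).2.1⟩
  exact (wellFounded_iff_isEmpty_descending_chain.1 (hV u)).false
    ⟨fun n => (p (n + 1)).2, fun n => ⟨(hp (n + 1)).2.2.1, (hp (n + 1)).2.2.2.1.symm,
      (hp (n + 1)).2.2.2.2 u (hu (n + 2))⟩⟩

theorem exists_lt_omega_one_forall_treeRankLE (hV : ∀ u, TreeWF (V u))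
    (hloc : ∀ u n, ∃ k, ∀ u' ∈ PiNat.cylinder u k, ∀ s, s.length = n → s ∈ V u → s ∈ V u') :
    ∃ α < ω₁, ∀ u, TreeRankLE (V u) α := by
  have hq := wellFounded_boundingRel hV
  refine ⟨⨆ p, (hq.apply p).rank, iSup_lt_omega_one (rank_lt_omega_one hq), fun u => ?_⟩
  choose k hk using hloc u
  -- a strictly increasing majorant of the moduli `k`
  set m : ℕ → ℕ := fun n => ∑ j ∈ Finset.range (n + 1), (k j + 1)
  have hm : StrictMono m := strictMono_nat_of_lt_succ fun n => by
    simp only [m, Finset.sum_range_succ _ (n + 1)]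
    omega
  have hkm : ∀ n, k n ≤ m n := fun n =>
    (Nat.le_succ _).trans (Finset.single_le_sum (f := fun j => k j + 1)
      (fun _ _ => Nat.zero_le _) (Finset.self_mem_range_succ n))
  let φ : List ℕ → List ℕ × List ℕ := fun s => (initSeg u (m s.length), s)
  have hφ : ∀ a b, branchRel (V u) b a → BoundingRel V (φ b) (φ a) := by
    rintro a b ⟨hab, hne, hb⟩
    have hlen := hm (hab.length_lt_of_ne (Ne.symm hne))
    refine ⟨initSeg_prefix_initSeg u hlen.le, fun h => ?_, hab, Ne.symm hne, fun u' hu' => ?_⟩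
    · exact hlen.ne (by simpa [φ] using congrArg List.length h)
    · rw [length_initSeg, initSeg_eq_initSeg_iff] at hu'
      exact hk b.length u' (PiNat.cylinder_anti u (hkm _) hu') b rfl hb
  rw [treeRankLE_iff_accRankLE]
  exact (accRankLE_of_forall_rel_lt (S := univ) (fun s => (hq.apply (φ s)).rank)
    (fun a _ b hb => ⟨trivial, (hq.apply _).rank_lt_of_rel (hφ a b hb)⟩) trivial).mono
    (Ordinal.le_iSup _ _)

theorem exists_lt_omega_one_forall_treeRankLE_secTree (T : Set (List (ℕ × ℕ × ℕ))) (x : ℕ → ℕ)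
    (hD : AnalyticSet {y | TreeWF (secTree T x y)}) :
    ∃ α < ω₁, ∀ y, TreeWF (secTree T x y) → TreeRankLE (secTree T x y) α := by
  rw [AnalyticSet] at hD
  rcases hD with hD | ⟨g, hg, hD⟩
  · exact ⟨0, omega_pos 1, fun y hy => (hD.subset hy).elim⟩
  have hloc : ∀ u n, ∃ k, ∀ u' ∈ PiNat.cylinder u k, ∀ s, s.length = n →
      s ∈ secTree T x (g u) → s ∈ secTree T x (g u') := fun u n => by
    obtain ⟨k, hk⟩ := PiNat.exists_cylinder_subset ((PiNat.isOpen_cylinder _ (g u) n).preimage hg)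
      (show u ∈ g ⁻¹' PiNat.cylinder (g u) n from PiNat.self_mem_cylinder _ _)
    refine ⟨k, fun u' hu' s hs => (mem_secTree_congr T fun i hi => ?_).1⟩
    exact (PiNat.mem_cylinder_iff.1 (hk hu') i (hs ▸ hi)).symm
  obtain ⟨α, hα, hrank⟩ := exists_lt_omega_one_forall_treeRankLE
    (fun u => (hD ▸ mem_range_self u : g u ∈ {y | TreeWF (secTree T x y)})) hloc
  refine ⟨α, hα, fun y hy => ?_⟩
  obtain ⟨u, rfl⟩ : y ∈ range g := hD ▸ hy
  exact hrank u

end Boundedness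

section BorelSections

variable {A : Set ((ℕ → ℕ) × (ℕ → ℕ))} {T : Set (List (ℕ × ℕ × ℕ))}

theorem section_eq_section_Aapprox_iff
    (hrep : ∀ p : (ℕ → ℕ) × (ℕ → ℕ), p ∈ A ↔ ¬ TreeWF (secTree T p.1 p.2)) {x : ℕ → ℕ}
    {α : Ordinal} : {y | (x, y) ∈ A} = {y | (x, y) ∈ Aapprox T α} ↔
      ∀ y, TreeWF (secTree T x y) → TreeRankLE (secTree T x y) α := by
  simp only [Set.ext_iff, mem_ofPred_eq, hrep, Aapprox]
  exact ⟨fun h y hy => not_not.1 fun hr => (h y).2 hr hy,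
    fun h y => ⟨fun hy hr => hy hr.treeWF, fun hr hy => hr (h y hy)⟩⟩

set_option synthInstance.maxSize 1000 in
theorem isPi12_deltaSet
    (hrep : ∀ p : (ℕ → ℕ) × (ℕ → ℕ), p ∈ A ↔ ¬ TreeWF (secTree T p.1 p.2)) :
    IsPi12 (DeltaSet A T) := by
  set Q : Set (((ℕ → ℕ) × (ℕ → ℕ)) × (ℕ → ℕ)) := {q | TreeWF (secTree T q.1.1 q.2) ∧
    ¬ HasRankFunctionInto (secTree T q.1.1 q.2) (relOf q.1.2)}
  have hQ : IsPi11 Q := by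
    have : Qᶜ = {q | ¬ TreeWF (secTree T q.1.1 q.2)} ∪
        {q | HasRankFunctionInto (secTree T q.1.1 q.2) (relOf q.1.2)} := by
      ext q
      simp only [Q, mem_compl_iff, mem_ofPred_eq, mem_union, not_and_not_right, imp_iff_not_or]
    rw [IsPi11, this]
    exact (analyticSet_not_treeWF_secTree T (by fun_prop) (by fun_prop)).union
      (analyticSet_hasRankFunctionInto_secTree T (by fun_prop) (by fun_prop) (by fun_prop))
  have hcompl : (DeltaSet A T)ᶜ = {p | ¬ WOcode p.2} ∪ Prod.fst '' Q := by
    ext ⟨x, f⟩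
    by_cases hf : WOcode f
    · have : @type ℕ (relOf f) hf = otf f := (otf_eq_type hf).symm
      simp only [DeltaSet, mem_compl_iff, mem_ofPred_eq, hf, true_and,
        section_eq_section_Aapprox_iff hrep, ← this, @treeRankLE_type_iff _ ℕ _ _ hf]
      simp [Q, hf]
    · simp [DeltaSet, hf]
  rw [IsPi12, hcompl]
  exact (analyticSet_not_woCode measurable_snd).isSigma12.union ⟨Q, hQ, rfl⟩

theorem setOf_measurableSet_section_eq_image_deltaSet
    (hrep : ∀ p : (ℕ → ℕ) × (ℕ → ℕ), p ∈ A ↔ ¬ TreeWF (secTree T p.1 p.2)) :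
    {x | MeasurableSet {y | (x, y) ∈ A}} = Prod.fst '' DeltaSet A T := by
  ext x
  constructor
  · intro (hx : MeasurableSet {y | (x, y) ∈ A})
    have hD : AnalyticSet {y | TreeWF (secTree T x y)} := by
      have : {y | TreeWF (secTree T x y)} = {y | (x, y) ∈ A}ᶜ := by ext y; simp [hrep]
      exact this ▸ hx.compl.analyticSet
    obtain ⟨α, hα, hbound⟩ := exists_lt_omega_one_forall_treeRankLE_secTree T x hD
    obtain ⟨f, hf, hαf⟩ := exists_woCode_le_otf hα
    exact ⟨(x, f), ⟨hf, (section_eq_section_Aapprox_iff hrep).2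
      fun y hy => (hbound y hy).mono hαf⟩, rfl⟩
  · rintro ⟨⟨x, f⟩, ⟨hf, heq⟩, rfl⟩
    exact (heq ▸ measurableSet_section_Aapprox T x (otf_lt_omega_one hf) :)

end BorelSections

theorem deltaSet_pi12_and_borelSections_sigma13_general
    (A : Set ((ℕ → ℕ) × (ℕ → ℕ))) (T : Set (List (ℕ × ℕ × ℕ)))
    (hrep : ∀ p : (ℕ → ℕ) × (ℕ → ℕ), p ∈ A ↔ ¬ TreeWF (secTree T p.1 p.2)) :
    IsPi12 (DeltaSet A T) ∧
      IsSigma13 {x : ℕ → ℕ | MeasurableSet {y | (x, y) ∈ A}} :=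
  ⟨isPi12_deltaSet hrep,
    DeltaSet A T, isPi12_deltaSet hrep, setOf_measurableSet_section_eq_image_deltaSet hrep⟩

/-- `Δ = {(x,f) : f ∈ WO, δ(x) ≤ ot(f)}` is Π¹₂, and
`{x : A_x is Borel}` is Σ¹₃. -/
theorem deltaSet_pi12_and_borelSections_sigma13
    (A : Set ((ℕ → ℕ) × (ℕ → ℕ))) (T : Set (List (ℕ × ℕ × ℕ)))
    (hA : AnalyticSet A)
    (hrep : ∀ p : (ℕ → ℕ) × (ℕ → ℕ), p ∈ A ↔ ¬ TreeWF (secTree T p.1 p.2)) :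
    IsPi12 (DeltaSet A T) ∧
      IsSigma13 {x : ℕ → ℕ | MeasurableSet {y | (x, y) ∈ A}} :=
  deltaSet_pi12_and_borelSections_sigma13_general A T hrep
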